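/- arXiv:1907.05515 — 2 statements merged into one kernel-verified Lean document; each statement's English description precedes it below -/
import Mathlib

section
/- Let x ∈ ℝⁿ be a unit vector, let 0 < γ < 1 and B ≥ 1 be constants with C = min(√((B − (9/16)(1−γ))/(B − (1−γ))), 3√3/4) and suppose ‖x‖_∞ < C/√n. Let S = {i : |xᵢ| < 0.75/√n}. If |S| ≥ (1−γ)n/B, then Σᵢ xᵢ² < C²(1 − (1−γ)/B) + (9/16)·(1−γ)/B ≤ 1, a contradiction; hence |S| < (1−γ)n/B. -/
set_option maxHeartbeats 1000000


theorem few_small_coordinates (n : ℕ) (x : Fin n → ℝ)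
    (hx : ∑ i, (x i) ^ 2 = 1)
    (γ B C : ℝ) (hγ0 : 0 < γ) (hγ1 : γ < 1) (hB : 1 ≤ B)
    (hC : C = min (Real.sqrt ((B - (9 / 16) * (1 - γ)) / (B - (1 - γ))))
      (3 * Real.sqrt 3 / 4))
    (hxinf : ∀ i, |x i| < C / Real.sqrt n) :
    ((Finset.univ.filter fun i : Fin n =>
        |x i| < 0.75 / Real.sqrt n).card : ℝ) < (1 - γ) * n / B := by
  by_contra hcontra
  push_neg at hcontra
  have hn : 0 < n := by
    rcases Nat.eq_zero_or_pos n with h | h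
    · subst h; simp at hx
    · exact h
  have hnR : (0:ℝ) < n := by exact_mod_cast hn
  have hsq : (0:ℝ) < Real.sqrt n := Real.sqrt_pos.mpr hnR
  have hsq2 : Real.sqrt n ^ 2 = (n:ℝ) := Real.sq_sqrt hnR.le
  have ht0 : (0:ℝ) < 1 - γ := by linarith
  have hBt : (0:ℝ) < B - (1 - γ) := by linarith
  have hB0 : (0:ℝ) < B := by linarith
  have hr1 : 1 ≤ (B - 9 / 16 * (1 - γ)) / (B - (1 - γ)) := by
    rw [le_div_iff₀ hBt]; nlinarith
  have hC1 : 1 ≤ C := by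
    rw [hC]
    refine le_min ?_ ?_
    · calc (1:ℝ) = Real.sqrt 1 := Real.sqrt_one.symm
        _ ≤ _ := Real.sqrt_le_sqrt hr1
    · nlinarith [Real.sq_sqrt (by norm_num : (0:ℝ) ≤ 3), Real.sqrt_nonneg 3]
  have hC0 : (0:ℝ) < C := by linarith
  have hCle : C ≤ Real.sqrt ((B - 9 / 16 * (1 - γ)) / (B - (1 - γ))) := by
    rw [hC]; exact min_le_left _ _
  have hC2r : C ^ 2 ≤ (B - 9 / 16 * (1 - γ)) / (B - (1 - γ)) := by
    calc C ^ 2 ≤ Real.sqrt ((B - 9 / 16 * (1 - γ)) / (B - (1 - γ))) ^ 2 :=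
          pow_le_pow_left₀ hC0.le hCle 2
      _ = _ := Real.sq_sqrt (by linarith)
  have hC2B : C ^ 2 * (B - (1 - γ)) ≤ B - 9 / 16 * (1 - γ) := by
    rw [div_eq_mul_inv] at hC2r
    calc C ^ 2 * (B - (1 - γ))
        ≤ (B - 9 / 16 * (1 - γ)) * (B - (1 - γ))⁻¹ * (B - (1 - γ)) := by
          exact mul_le_mul_of_nonneg_right hC2r hBt.le
      _ = B - 9 / 16 * (1 - γ) := by field_simp
  have hne : (Finset.univ : Finset (Fin n)).Nonempty := by
    haveI : Nonempty (Fin n) := Fin.pos_iff_nonempty.mp hn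
    exact Finset.univ_nonempty
  have key : ∀ i ∈ Finset.univ,
      x i ^ 2 < (if |x i| < 0.75 / Real.sqrt n then (9/16)/(n:ℝ) else C^2/(n:ℝ)) := by
    intro i _
    by_cases h : |x i| < 0.75 / Real.sqrt n
    · rw [if_pos h]
      have h2 : x i ^ 2 < (0.75 / Real.sqrt n) ^ 2 := by
        rw [← sq_abs]
        exact pow_lt_pow_left₀ h (abs_nonneg _) (by norm_num)
      have : (0.75 / Real.sqrt n : ℝ) ^ 2 = (9/16)/(n:ℝ) := by
        rw [div_pow, hsq2]; norm_num
      linarith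
    · rw [if_neg h]
      have h2 : x i ^ 2 < (C / Real.sqrt n) ^ 2 := by
        rw [← sq_abs]
        exact pow_lt_pow_left₀ (hxinf i) (abs_nonneg _) (by norm_num)
      have : (C / Real.sqrt n : ℝ) ^ 2 = C^2/(n:ℝ) := by rw [div_pow, hsq2]
      linarith
  have hsum := Finset.sum_lt_sum_of_nonempty hne key
  rw [hx, Finset.sum_ite, Finset.sum_const, Finset.sum_const, nsmul_eq_mul,
    nsmul_eq_mul] at hsum
  set S := Finset.univ.filter fun i : Fin n => |x i| < 0.75 / Real.sqrt n with hSdef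
  have hcards : S.card + (Finset.univ.filter fun i : Fin n =>
      ¬ |x i| < 0.75 / Real.sqrt n).card = n := by
    rw [Finset.card_filter_add_card_filter_not, Finset.card_univ, Fintype.card_fin]
  set s : ℝ := (S.card : ℝ) with hsdef
  have hc2 : ((Finset.univ.filter fun i : Fin n =>
      ¬ |x i| < 0.75 / Real.sqrt n).card : ℝ) = (n:ℝ) - s := by
    rw [hsdef]
    have := congrArg (Nat.cast : ℕ → ℝ) hcards
    push_cast at this
    linarith
  rw [hc2] at hsum
  have hlt' : (n:ℝ) < s * (9/16) + ((n:ℝ) - s) * C ^ 2 := by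
    have heq : s * ((9:ℝ)/16/(n:ℝ)) + ((n:ℝ) - s) * (C^2/(n:ℝ))
        = (s * (9/16) + ((n:ℝ) - s) * C ^ 2) / n := by ring
    rw [heq, lt_div_iff₀ hnR, one_mul] at hsum
    exact hsum
  have hcon' : (1 - γ) * n ≤ s * B := by
    rw [div_le_iff₀ hB0] at hcontra
    exact hcontra
  have hC2ge : (1:ℝ) ≤ C ^ 2 := by nlinarith
  nlinarith [mul_le_mul_of_nonneg_right hcon' (by nlinarith : (0:ℝ) ≤ C^2 - 9/16),
    mul_le_mul_of_nonneg_left hC2B hnR.le,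
    mul_lt_mul_of_pos_right hlt' hB0]
end

section
/- As δ → 0⁺, the inverse Gaussian tail satisfies Φ̄^{−1}(δ)² = 2 ln(1/δ) − 2 ln(2√π) − ln ln(1/δ) + o(1). -/
open MeasureTheory Filter

/-!
Write `T x = ∫ₓ^∞ exp (-s²/2) ds`, so that `Φ̄ = T / √(2π)`. Comparing the integrand with the
derivatives of `-exp (-s²/2)` and `-exp (-s²/2) / s` gives the Mills-ratio bounds
`x T(x) ≤ exp (-x²/2) ≤ (1 + x⁻²) x T(x)`, hence `R(x) := x exp (x²/2) T(x) → 1`.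
For `x = Φ̄⁻¹(δ)`, which tends to `∞` as `δ → 0⁺`, the quantity `L = ln (1/δ)` is
`x²/2 + ln x + ln √(2π) - ln R(x)`, so `2L/x² → 1`, and the expression in the theorem is exactly
`2 ln R(x) + ln (2L/x²) → 0`.
-/

open Real Set Topology

noncomputable def gaussTail (x : ℝ) : ℝ := ∫ s in Ioi x, exp (-s ^ 2 / 2)

lemma integrable_exp_neg_sq_div_two : Integrable fun s : ℝ => exp (-s ^ 2 / 2) := by
  simpa [neg_div, div_eq_inv_mul] using integrable_exp_neg_mul_sq (b := 1 / 2) (by norm_num)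

lemma integrable_mul_exp_neg_sq_div_two : Integrable fun s : ℝ => s * exp (-s ^ 2 / 2) := by
  simpa [neg_div, div_eq_inv_mul] using integrable_mul_exp_neg_mul_sq (b := 1 / 2) (by norm_num)

lemma tendsto_exp_neg_sq_div_two : Tendsto (fun s : ℝ => exp (-s ^ 2 / 2)) atTop (𝓝 0) := by
  have h := (tendsto_pow_atTop (α := ℝ) two_ne_zero).atTop_div_const (by norm_num : (0 : ℝ) < 2)
  refine (tendsto_exp_neg_atTop_nhds_zero.comp h).congr fun s => ?_
  simp [neg_div]

lemma hasDerivAt_exp_neg_sq_div_two (s : ℝ) :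
    HasDerivAt (fun s : ℝ => exp (-s ^ 2 / 2)) (-s * exp (-s ^ 2 / 2)) s := by
  have h : HasDerivAt (fun s : ℝ => -s ^ 2 / 2) (-s) s :=
    ((hasDerivAt_pow 2 s).neg.div_const 2).congr_deriv (by ring)
  simpa [mul_comm] using h.exp

lemma gaussTail_pos (x : ℝ) : 0 < gaussTail x := by
  have : NeZero (volume.restrict (Ioi x)) := ⟨by simp⟩
  exact integral_exp_pos integrable_exp_neg_sq_div_two.integrableOn

lemma gaussTail_antitone : Antitone gaussTail := fun _ _ hxy =>
  setIntegral_mono_set integrable_exp_neg_sq_div_two.integrableOn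
    (Eventually.of_forall fun _ => (exp_pos _).le) (Ioi_subset_Ioi hxy).eventuallyLE

lemma integral_Ioi_mul_exp_neg_sq_div_two (x : ℝ) :
    ∫ s in Ioi x, s * exp (-s ^ 2 / 2) = exp (-x ^ 2 / 2) := by
  have := integral_Ioi_of_hasDerivAt_of_tendsto' (a := x)
    (fun s _ => (hasDerivAt_exp_neg_sq_div_two s).neg)
    (by simpa using integrable_mul_exp_neg_sq_div_two.integrableOn) tendsto_exp_neg_sq_div_two.neg
  simpa using this

lemma hasDerivAt_exp_neg_sq_div_two_div {s : ℝ} (hs : s ≠ 0) :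
    HasDerivAt (fun s : ℝ => -(exp (-s ^ 2 / 2) / s)) ((1 + (s ^ 2)⁻¹) * exp (-s ^ 2 / 2)) s := by
  refine ((hasDerivAt_exp_neg_sq_div_two s).div (hasDerivAt_id s) hs).neg.congr_deriv ?_
  simp only [id]
  field_simp
  ring

lemma integral_Ioi_one_add_inv_sq_mul_exp_neg_sq_div_two {x : ℝ} (hx : 0 < x) :
    ∫ s in Ioi x, (1 + (s ^ 2)⁻¹) * exp (-s ^ 2 / 2) = exp (-x ^ 2 / 2) / x := by
  have hlim : Tendsto (fun s : ℝ => -(exp (-s ^ 2 / 2) / s)) atTop (𝓝 0) := by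
    simpa using (tendsto_exp_neg_sq_div_two.div_atTop tendsto_id).neg
  rw [integral_Ioi_of_hasDerivAt_of_nonneg'
    (fun s hs => hasDerivAt_exp_neg_sq_div_two_div (hx.trans_le hs).ne')
    (fun s _ => by positivity) hlim]
  ring

lemma mul_gaussTail_le_exp (x : ℝ) : x * gaussTail x ≤ exp (-x ^ 2 / 2) := by
  rw [gaussTail, ← integral_const_mul, ← integral_Ioi_mul_exp_neg_sq_div_two x]
  refine setIntegral_mono_on (integrable_exp_neg_sq_div_two.const_mul x).integrableOn
    integrable_mul_exp_neg_sq_div_two.integrableOn measurableSet_Ioi fun s hs => ?_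
  exact mul_le_mul_of_nonneg_right (le_of_lt hs) (exp_pos _).le

lemma exp_le_one_add_inv_sq_mul_gaussTail {x : ℝ} (hx : 0 < x) :
    exp (-x ^ 2 / 2) ≤ (1 + (x ^ 2)⁻¹) * (x * gaussTail x) := by
  have heq := integral_Ioi_one_add_inv_sq_mul_exp_neg_sq_div_two hx
  have hint : IntegrableOn (fun s => (1 + (s ^ 2)⁻¹) * exp (-s ^ 2 / 2)) (Ioi x) :=
    .of_integral_ne_zero (by rw [heq]; positivity)
  have : exp (-x ^ 2 / 2) / x ≤ (1 + (x ^ 2)⁻¹) * gaussTail x := by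
    rw [← heq, gaussTail, ← integral_const_mul]
    refine setIntegral_mono_on hint (integrable_exp_neg_sq_div_two.const_mul _).integrableOn
      measurableSet_Ioi fun s hs => ?_
    have hxs : x ≤ s := le_of_lt hs
    gcongr
  rw [div_le_iff₀ hx] at this
  linarith

lemma tendsto_mul_exp_mul_gaussTail :
    Tendsto (fun x => x * exp (x ^ 2 / 2) * gaussTail x) atTop (𝓝 1) := by
  have hlow : Tendsto (fun x : ℝ => (1 + (x ^ 2)⁻¹)⁻¹) atTop (𝓝 1) := by
    simpa using ((tendsto_inv_atTop_zero.comp (tendsto_pow_atTop two_ne_zero)).const_add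
      (1 : ℝ)).inv₀ (by norm_num)
  have hexp (x : ℝ) : exp (x ^ 2 / 2) * exp (-x ^ 2 / 2) = 1 := by
    rw [← exp_add]; simp [neg_div]
  refine tendsto_of_tendsto_of_tendsto_of_le_of_le' hlow tendsto_const_nhds ?_ ?_
  · filter_upwards [eventually_gt_atTop 0] with x hx
    rw [inv_le_iff_one_le_mul₀ (by positivity)]
    calc 1 = exp (x ^ 2 / 2) * exp (-x ^ 2 / 2) := (hexp x).symm
      _ ≤ exp (x ^ 2 / 2) * ((1 + (x ^ 2)⁻¹) * (x * gaussTail x)) := by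
        gcongr; exact exp_le_one_add_inv_sq_mul_gaussTail hx
      _ = _ := by ring
  · filter_upwards with x
    calc x * exp (x ^ 2 / 2) * gaussTail x = exp (x ^ 2 / 2) * (x * gaussTail x) := by ring
      _ ≤ exp (x ^ 2 / 2) * exp (-x ^ 2 / 2) := by gcongr; exact mul_gaussTail_le_exp x
      _ = 1 := hexp x

lemma tendsto_log_div_sq_atTop : Tendsto (fun x : ℝ => log x / x ^ 2) atTop (𝓝 0) := by
  refine ((isLittleO_log_rpow_atTop two_pos).tendsto_div_nhds_zero).congr fun x => ?_
  norm_cast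

lemma Antitone.tendsto_atTop_of_tendsto_comp {α β γ : Type*} [LinearOrder β] [LinearOrder γ]
    [TopologicalSpace γ] [OrderTopology γ] {f : β → γ} {g : α → β} {l : Filter α} {a : γ}
    (hf : Antitone f) (hlt : ∀ x, a < f x) (h : Tendsto (f ∘ g) l (𝓝 a)) :
    Tendsto g l atTop :=
  tendsto_atTop.2 fun M => (h.eventually (gt_mem_nhds (hlt M))).mono fun _ hM =>
    (hf.reflect_lt hM).le

lemma two_mul_log_two_mul_sqrt_pi : 2 * log (2 * √π) = 2 * log √(2 * π) + log 2 := by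
  rw [log_mul two_ne_zero (sqrt_pos.2 pi_pos).ne', log_sqrt pi_pos.le, log_sqrt (by positivity),
    log_mul two_ne_zero pi_pos.ne']
  ring

lemma tendsto_sq_sub_log_log_gaussTail :
    Tendsto (fun x : ℝ => x ^ 2 - (2 * log (√(2 * π) / gaussTail x) - 2 * log (2 * √π)
      - log (log (√(2 * π) / gaussTail x)))) atTop (𝓝 0) := by
  set R := fun x => x * exp (x ^ 2 / 2) * gaussTail x with hR_def
  set L := fun x => log (√(2 * π) / gaussTail x) with hL_def
  have hR : Tendsto (fun x => log (R x)) atTop (𝓝 0) := by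
    simpa using tendsto_mul_exp_mul_gaussTail.log one_ne_zero
  have hL_eq : ∀ x > 0, L x = log √(2 * π) + x ^ 2 / 2 + log x - log (R x) := fun x hx => by
    simp only [hL_def, hR_def]
    rw [log_div (by positivity) (gaussTail_pos x).ne', log_mul (by positivity) (gaussTail_pos x).ne',
      log_mul hx.ne' (exp_pos _).ne', log_exp]
    ring
  have hL : Tendsto (fun x => 2 * L x / x ^ 2) atTop (𝓝 1) := by
    have h := (((tendsto_const_nhds (x := 2 * log √(2 * π))).sub (hR.const_mul 2)).div_atTop
      (tendsto_pow_atTop two_ne_zero)).add (tendsto_log_div_sq_atTop.const_mul 2)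
    rw [zero_add, mul_zero] at h
    replace h := h.const_add 1
    rw [add_zero] at h
    refine h.congr' ?_
    filter_upwards [eventually_gt_atTop 0] with x hx
    rw [hL_eq x hx]
    field_simp
    ring
  have hkey : ∀ᶠ x in atTop, 2 * log (R x) + log (2 * L x / x ^ 2) =
      x ^ 2 - (2 * L x - 2 * log (2 * √π) - log (L x)) := by
    filter_upwards [eventually_gt_atTop 0, hL.eventually (lt_mem_nhds zero_lt_one)]
      with x hx hLx
    have hL0 : L x ≠ 0 := fun h => by simp [h] at hLx
    rw [log_div (by positivity) (by positivity), log_mul two_ne_zero hL0, log_pow, hL_eq x hx,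
      two_mul_log_two_mul_sqrt_pi]
    push_cast
    ring
  simpa only [mul_zero, log_one, add_zero] using
    ((hR.const_mul 2).add (hL.log one_ne_zero)).congr' hkey

theorem inverse_gaussian_tail_asymptotic
    (g : ℝ → ℝ)
    (hg : ∀ δ : ℝ, 0 < δ → δ < 1 / 2 →
      (∫ s in Set.Ioi (g δ), (1 / Real.sqrt (2 * Real.pi)) * Real.exp (-s ^ 2 / 2)) = δ) :
    Tendsto (fun δ : ℝ =>
        (g δ) ^ 2 - (2 * Real.log (1 / δ) - 2 * Real.log (2 * Real.sqrt Real.pi)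
          - Real.log (Real.log (1 / δ))))
      (nhdsWithin 0 (Set.Ioi 0)) (nhds 0) := by
  have hc : 0 < √(2 * π) := by positivity
  have hT : ∀ᶠ δ in 𝓝[>] 0, gaussTail (g δ) = √(2 * π) * δ := by
    filter_upwards [Ioo_mem_nhdsGT (by norm_num : (0 : ℝ) < 1 / 2)] with δ hδ
    have h := hg δ hδ.1 hδ.2
    rw [integral_const_mul, ← gaussTail] at h
    field_simp at h
    exact h
  have hg_top : Tendsto g (𝓝[>] 0) atTop := by
    refine gaussTail_antitone.tendsto_atTop_of_tendsto_comp gaussTail_pos ?_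
    have h : Tendsto (fun δ : ℝ => √(2 * π) * δ) (𝓝[>] 0) (𝓝 0) := by
      simpa using ((continuous_const_mul (√(2 * π))).tendsto 0).mono_left nhdsWithin_le_nhds
    exact h.congr' (hT.mono fun _ h => h.symm)
  refine (tendsto_sq_sub_log_log_gaussTail.comp hg_top).congr' ?_
  filter_upwards [hT] with δ hδ
  rw [Function.comp_apply, hδ, div_mul_cancel_left₀ hc.ne', one_div]
end
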